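/- arXiv:1809.09670 — 4 statements merged into one kernel-verified Lean document; each statement's English description precedes it below -/
import Mathlib

section
/- Let n be a natural number and let A = a/(c·n₁) and B = b/(d·n₂) be rational numbers in reduced form with n = n₁·n₂ and |a·d·n₂ − b·c·n₁| = 1. Then A and B are Farey neighbours (i.e. |ps − qr| = 1 for the reduced forms p/q, r/s) and moreover n·A and n·B are also Farey neighbours. -/
/-- Two rationals are Farey neighbours if, in lowest terms `p/q` and `r/s`,
`|p·s − q·r| = 1`. -/
def FareyNbr (A B : ℚ) : Prop := (A.num * (B.den : ℤ) - B.num * (A.den : ℤ)).natAbs = 1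

lemma fareyNbr_of_cross (p r q s : ℤ) (hq : 0 < q) (hs : 0 < s)
    (hpq : Int.gcd p q = 1) (hrs : Int.gcd r s = 1)
    (h : (p * s - r * q).natAbs = 1) :
    FareyNbr ((p : ℚ) / q) ((r : ℚ) / s) := by
  unfold FareyNbr
  rw [Rat.num_div_eq_of_coprime hq hpq, Rat.num_div_eq_of_coprime hs hrs,
    Rat.den_div_eq_of_coprime hq hpq, Rat.den_div_eq_of_coprime hs hrs]
  exact h

/-- if `A = a/(c·n₁)` and `B = b/(d·n₂)` are in reduced form with
`n = n₁·n₂` and `|a·d·n₂ − b·c·n₁| = 1`, then `A, B` are Farey neighbours and so are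
`n·A, n·B`. -/
theorem farey_neighbours_of_scaled_form
    (a b : ℤ) (c d n₁ n₂ n : ℕ)
    (hn : n = n₁ * n₂)
    (hcpos : 0 < c * n₁) (hdpos : 0 < d * n₂)
    (hA : Int.gcd a ((c : ℤ) * n₁) = 1) (hB : Int.gcd b ((d : ℤ) * n₂) = 1)
    (h : (a * d * (n₂ : ℤ) - b * c * (n₁ : ℤ)).natAbs = 1) :
    FareyNbr ((a : ℚ) / ((c : ℚ) * n₁)) ((b : ℚ) / ((d : ℚ) * n₂)) ∧
    FareyNbr ((n : ℚ) * ((a : ℚ) / ((c : ℚ) * n₁)))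
      ((n : ℚ) * ((b : ℚ) / ((d : ℚ) * n₂))) := by
  have hc0 : (0:ℤ) < (c:ℤ) * n₁ := by exact_mod_cast hcpos
  have hd0 : (0:ℤ) < (d:ℤ) * n₂ := by exact_mod_cast hdpos
  have hcQ : ((c:ℚ) * n₁) ≠ 0 := by exact_mod_cast hc0.ne'
  have hc : 0 < c := Nat.pos_of_ne_zero (fun hc => by simp [hc] at hcpos)
  have hd : 0 < d := Nat.pos_of_ne_zero (fun hd => by simp [hd] at hdpos)
  have hn1 : 0 < n₁ := Nat.pos_of_ne_zero (fun h' => by simp [h'] at hcpos)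
  have hn2 : 0 < n₂ := Nat.pos_of_ne_zero (fun h' => by simp [h'] at hdpos)
  -- sign analysis
  have hpm : a * d * (n₂ : ℤ) - b * c * (n₁ : ℤ) = 1 ∨
      a * d * (n₂ : ℤ) - b * c * (n₁ : ℤ) = -1 := by
    rcases Int.natAbs_eq (a * d * (n₂ : ℤ) - b * c * (n₁ : ℤ)) with h1 | h1 <;>
      rw [h] at h1 <;> [left; right] <;> omega
  have hg1 : Int.gcd (a * n₂) (c : ℤ) = 1 := by
    rw [Int.isCoprime_iff_gcd_eq_one.symm] at *
    rcases hpm with h1 | h1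
    · exact ⟨(d:ℤ), -(b * n₁), by linear_combination h1⟩
    · exact ⟨-(d:ℤ), b * n₁, by linear_combination -h1⟩
  have hg2 : Int.gcd (b * n₁) (d : ℤ) = 1 := by
    rw [Int.isCoprime_iff_gcd_eq_one.symm] at *
    rcases hpm with h1 | h1
    · exact ⟨-(c:ℤ), a * n₂, by linear_combination h1⟩
    · exact ⟨(c:ℤ), -(a * n₂), by linear_combination -h1⟩
  constructor
  · have := fareyNbr_of_cross a b ((c:ℤ) * n₁) ((d:ℤ) * n₂) hc0 hd0 hA hB
      (by rw [show a * ((d:ℤ) * n₂) - b * ((c:ℤ) * n₁) = a * d * n₂ - b * c * n₁ by ring]; exact h)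
    convert this using 2 <;> push_cast <;> ring
  · have e1 : (n:ℚ) * ((a : ℚ) / ((c : ℚ) * n₁)) = ((a * (n₂:ℤ) : ℤ) : ℚ) / ((c:ℤ) : ℚ) := by
      subst hn; push_cast; field_simp
    have e2 : (n:ℚ) * ((b : ℚ) / ((d : ℚ) * n₂)) = ((b * (n₁:ℤ) : ℤ) : ℚ) / ((d:ℤ) : ℚ) := by
      subst hn; push_cast; field_simp
    rw [e1, e2]
    exact fareyNbr_of_cross _ _ _ _ (by exact_mod_cast hc) (by exact_mod_cast hd) hg1 hg2
      (by rw [show a * (n₂:ℤ) * d - b * (n₁:ℤ) * c = a * d * n₂ - b * c * n₁ by ring]; exact h)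
end

section
/- Let n be a positive integer and let A and B be rational numbers that are Farey neighbours in both the Farey complex and its 1/n-scaling (i.e. A, B are Farey neighbours and n·A, n·B are Farey neighbours). Then A and B can be written in reduced form as a/(c·n₁) and b/(d·n₂) with n = n₁·n₂ and |a·d·n₂ − b·c·n₁| = 1. -/
lemma scaled_num_den_aux (n : ℕ) (A : ℚ) :
    ((n : ℚ) * A).num = ((n / Nat.gcd n A.den : ℕ) : ℤ) * A.num ∧
    ((n : ℚ) * A).den = A.den / Nat.gcd n A.den := by
  constructor
  · rw [Rat.mul_num, Rat.num_natCast, Rat.den_natCast, one_mul, Int.natAbs_mul,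
      Int.natAbs_natCast, Nat.Coprime.gcd_mul_right_cancel _ A.reduced]
    set g := Nat.gcd n A.den with hgdef
    obtain ⟨u, hu⟩ : g ∣ n := Nat.gcd_dvd_left _ _
    rcases Nat.eq_zero_or_pos g with hg | hg
    · simp [Nat.eq_zero_of_gcd_eq_zero_left (hgdef ▸ hg)]
    · rw [hu, Nat.mul_div_cancel_left _ hg]
      push_cast
      rw [mul_assoc, Int.mul_ediv_cancel_left _ (by exact_mod_cast hg.ne')]
  · rw [Rat.mul_den, Rat.num_natCast, Rat.den_natCast, one_mul, Int.natAbs_mul,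
      Int.natAbs_natCast, Nat.Coprime.gcd_mul_right_cancel _ A.reduced]

/-- if `A, B` are Farey neighbours in both the Farey complex and its
`1/n`-scaling, then they can be written in reduced form as `a/(c·n₁)` and `b/(d·n₂)`
with `n = n₁·n₂` and `|a·d·n₂ − b·c·n₁| = 1`. -/
theorem scaled_form_of_farey_neighbours
    (n : ℕ) (hn : 0 < n) (A B : ℚ)
    (h1 : FareyNbr A B) (h2 : FareyNbr ((n : ℚ) * A) ((n : ℚ) * B)) :
    ∃ (a b : ℤ) (c d n₁ n₂ : ℕ),
      n = n₁ * n₂ ∧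
      A = (a : ℚ) / ((c : ℚ) * n₁) ∧ B = (b : ℚ) / ((d : ℚ) * n₂) ∧
      Int.gcd a ((c : ℤ) * n₁) = 1 ∧ Int.gcd b ((d : ℤ) * n₂) = 1 ∧
      (a * d * (n₂ : ℤ) - b * c * (n₁ : ℤ)).natAbs = 1 := by
  set g := Nat.gcd n A.den with hgdef
  set h := Nat.gcd n B.den with hhdef
  have hg0 : 0 < g := Nat.gcd_pos_of_pos_left _ hn
  have hh0 : 0 < h := Nat.gcd_pos_of_pos_left _ hn
  set u := n / g with hudef
  set v := n / h with hvdef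
  set c := A.den / g with hcdef
  set d := B.den / h with hddef
  have hu : n = g * u := (Nat.mul_div_cancel' (Nat.gcd_dvd_left _ _) ).symm
  have hv : n = h * v := (Nat.mul_div_cancel' (Nat.gcd_dvd_left _ _) ).symm
  have hcA : A.den = c * g := by
    rw [hcdef, Nat.div_mul_cancel (Nat.gcd_dvd_right _ _)]
  have hdB : B.den = d * h := by
    rw [hddef, Nat.div_mul_cancel (Nat.gcd_dvd_right _ _)]
  have hA := scaled_num_den_aux n A
  have hB := scaled_num_den_aux n B
  unfold FareyNbr at h1 h2
  rw [hA.1, hA.2, hB.1, hB.2, ← hcdef, ← hddef] at h2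
  -- h2 : ((u*A.num) * d - (v*B.num) * c).natAbs = 1
  have hu' : (n : ℤ) = (g : ℤ) * u := by exact_mod_cast congrArg (Nat.cast (R := ℤ)) hu
  have hv' : (n : ℤ) = (h : ℤ) * v := by exact_mod_cast congrArg (Nat.cast (R := ℤ)) hv
  have key : (n : ℤ) * (A.num * (B.den : ℤ) - B.num * (A.den : ℤ)) =
      ((g : ℤ) * h) * (((u : ℤ) * A.num) * (d : ℤ) - ((v : ℤ) * B.num) * (c : ℤ)) := by
    have hc' : (A.den : ℤ) = (c : ℤ) * g := by exact_mod_cast congrArg (Nat.cast (R := ℤ)) hcA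
    have hd' : (B.den : ℤ) = (d : ℤ) * h := by exact_mod_cast congrArg (Nat.cast (R := ℤ)) hdB
    rw [hc', hd']
    linear_combination (A.num * d * h) * hu' - (B.num * c * g) * hv'
  have hngh : n = g * h := by
    have := congrArg Int.natAbs key
    rw [Int.natAbs_mul, Int.natAbs_mul, h1, h2, Int.natAbs_natCast, Int.natAbs_mul,
      Int.natAbs_natCast, Int.natAbs_natCast, mul_one, mul_one] at this
    exact this
  refine ⟨A.num, B.num, c, d, g, h, hngh, ?_, ?_, ?_, ?_, ?_⟩
  · rw [show ((c : ℚ) * g) = (A.den : ℚ) by exact_mod_cast congrArg (Nat.cast (R := ℚ)) hcA.symm]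
    exact (Rat.num_div_den A).symm
  · rw [show ((d : ℚ) * h) = (B.den : ℚ) by exact_mod_cast congrArg (Nat.cast (R := ℚ)) hdB.symm]
    exact (Rat.num_div_den B).symm
  · rw [show ((c : ℤ) * g) = (A.den : ℤ) by exact_mod_cast congrArg (Nat.cast (R := ℤ)) hcA.symm]
    simpa [Int.gcd] using A.reduced
  · rw [show ((d : ℤ) * h) = (B.den : ℤ) by exact_mod_cast congrArg (Nat.cast (R := ℤ)) hdB.symm]
    simpa [Int.gcd] using B.reduced
  · have hc' : (A.den : ℤ) = (c : ℤ) * g := by exact_mod_cast congrArg (Nat.cast (R := ℤ)) hcA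
    have hd' : (B.den : ℤ) = (d : ℤ) * h := by exact_mod_cast congrArg (Nat.cast (R := ℤ)) hdB
    rw [hc', hd'] at h1
    convert h1 using 2
    ring
end

section
/- Let α be a positive irrational number and n a natural number. If some convergent denominator q_k of the continued fraction expansion of α satisfies n ∣ q_k and n < q_k, writing q_k = n·q'_k and p_k for the corresponding convergent numerator, then p_k/q'_k is a convergent of the continued fraction expansion of n·α, and consequently B(n·α) ≥ n. -/
/-- The Gauss map iteration. -/
noncomputable def gaussIter (α : ℝ) : ℕ → ℝ
  | 0 => α
  | n + 1 => (gaussIter α n - ⌊gaussIter α n⌋)⁻¹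

/-- The `n`-th partial quotient of the continued fraction expansion of `α`. -/
noncomputable def cfq (α : ℝ) (n : ℕ) : ℤ := ⌊gaussIter α n⌋

/-- Convergent numerators: `convP α (k+1)` is the `k`-th convergent numerator `p_k`,
with `convP α 0 = 1` playing the role of `p₋₁`. -/
noncomputable def convP (α : ℝ) : ℕ → ℤ
  | 0 => 1
  | 1 => cfq α 0
  | k + 2 => cfq α (k + 1) * convP α (k + 1) + convP α k

/-- Convergent denominators: `convQ α (k+1)` is the `k`-th convergent denominator `q_k`,
with `convQ α 0 = 0` playing the role of `q₋₁`. -/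
noncomputable def convQ (α : ℝ) : ℕ → ℤ
  | 0 => 0
  | 1 => 1
  | k + 2 => cfq α (k + 1) * convQ α (k + 1) + convQ α k

/-- `r` is a convergent of the continued fraction expansion of `β`. -/
noncomputable def IsConvergent (β : ℝ) (r : ℚ) : Prop :=
  ∃ j : ℕ, r = (convP β (j + 1) : ℚ) / (convQ β (j + 1) : ℚ)

/-!
Write `x = x_{k+1}` for the complete quotient of `α` and `X = x q_k + q_{k-1}`, so that
`(q_k α - p_k) X = (-1)^k`. As `q_k = n q'`, this says `|nα - p_k/q'| = 1/(q' X)`, and for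
`n ≥ 2` we have `X > q_k ≥ 2q'`, so Legendre's theorem makes `p_k/q'` a convergent `p'_j/q'_j`
of `nα`. The same identity for `nα` then forces `X = y q' + q'_{j-1}` for the complete quotient
`y` of `nα`, and comparing the two determinant identities gives `q' ∣ q_{k-1} - q'_{j-1}`.
Hence `y = n x + w` with `w` a nonnegative integer, so the partial quotient `⌊y⌋` is at least
`n`.
-/

section ContinuedFraction

variable {β : ℝ}

theorem irrational_gaussIter (hβ : Irrational β) : ∀ i, Irrational (gaussIter β i)
  | 0 => hβ
  | i + 1 => ((irrational_gaussIter hβ i).sub_intCast _).inv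

theorem one_lt_gaussIter_succ (hβ : Irrational β) (i : ℕ) : 1 < gaussIter β (i + 1) :=
  one_lt_inv_iff₀.2
    ⟨Int.fract_pos.2 ((irrational_gaussIter hβ i).ne_int _), Int.fract_lt_one _⟩

theorem one_le_cfq_succ (hβ : Irrational β) (i : ℕ) : 1 ≤ cfq β (i + 1) :=
  Int.le_floor.2 (by exact_mod_cast (one_lt_gaussIter_succ hβ i).le)

theorem gaussIter_succ_mul_sub_cfq (hβ : Irrational β) (i : ℕ) :
    gaussIter β (i + 1) * (gaussIter β i - cfq β i) = 1 :=
  inv_mul_cancel₀ (sub_ne_zero.2 ((irrational_gaussIter hβ i).ne_int _))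

theorem gaussIter_succ' (β : ℝ) : ∀ i, gaussIter β (i + 1) = gaussIter (gaussIter β 1) i
  | 0 => rfl
  | i + 1 => by
    change (gaussIter β (i + 1) - ⌊gaussIter β (i + 1)⌋)⁻¹ = _
    rw [gaussIter_succ' β i]
    rfl

theorem cfq_succ' (β : ℝ) (i : ℕ) : cfq β (i + 1) = cfq (gaussIter β 1) i := by
  rw [cfq, gaussIter_succ', cfq]

theorem convP_succ' (β : ℝ) : ∀ j,
    convP β (j + 1) = cfq β 0 * convP (gaussIter β 1) j + convQ (gaussIter β 1) j
  | 0 => by simp [convP, convQ]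
  | 1 => by simp only [convP, zero_add, cfq_succ', convQ, add_left_inj]; ring
  | j + 2 => by
    rw [convP, convP_succ' β (j + 1), convP_succ' β j, convP, convQ, cfq_succ']
    ring

theorem convQ_succ' (β : ℝ) : ∀ j, convQ β (j + 1) = convP (gaussIter β 1) j
  | 0 => rfl
  | 1 => by simp [convP, convQ, cfq_succ']
  | j + 2 => by rw [convQ, convQ_succ' β (j + 1), convQ_succ' β j, convP, cfq_succ']

theorem convP_mul_convQ_succ_sub (β : ℝ) : ∀ m,
    convP β m * convQ β (m + 1) - convP β (m + 1) * convQ β m = (-1) ^ m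
  | 0 => by simp [convP, convQ]
  | m + 1 => by
    rw [convP, convQ, pow_succ, ← convP_mul_convQ_succ_sub β m]
    ring

theorem isCoprime_convP_convQ (β : ℝ) (m : ℕ) :
    IsCoprime (convP β (m + 1)) (convQ β (m + 1)) :=
  ⟨-(-1) ^ m * convQ β m, (-1) ^ m * convP β m, by
    linear_combination (-1) ^ m * convP_mul_convQ_succ_sub β m +
      (Even.neg_one_pow ⟨m, rfl⟩ : ((-1 : ℤ) ^ (m + m) = 1))⟩

theorem convQ_nonneg (hβ : Irrational β) : ∀ j, 0 ≤ convQ β j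
  | 0 => le_rfl
  | 1 => zero_le_one
  | j + 2 => by
    have := one_le_cfq_succ hβ j
    have := convQ_nonneg hβ (j + 1)
    rw [convQ]
    nlinarith [convQ_nonneg hβ j]

theorem convQ_mono (hβ : Irrational β) : Monotone (convQ β) := by
  refine monotone_nat_of_le_succ fun j => ?_
  cases j with
  | zero => exact zero_le_one
  | succ j =>
    have := one_le_cfq_succ hβ j
    rw [convQ]
    nlinarith [convQ_nonneg hβ j, convQ_nonneg hβ (j + 1)]

theorem convQ_succ_pos (hβ : Irrational β) (j : ℕ) : 0 < convQ β (j + 1) :=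
  convQ_mono hβ (Nat.le_add_left 1 j)

theorem convergent_eq_convP_div_convQ (hβ : Irrational β) (j : ℕ) :
    β.convergent j = (convP β (j + 1) : ℚ) / convQ β (j + 1) := by
  induction j generalizing β with
  | zero => simp [convP, convQ, cfq, gaussIter]
  | succ j ih =>
    have hβ₁ : Irrational (gaussIter β 1) := irrational_gaussIter hβ 1
    have hP : (convP (gaussIter β 1) (j + 1) : ℚ) ≠ 0 := by
      rw [← convQ_succ']
      exact_mod_cast (convQ_succ_pos hβ (j + 1)).ne'
    rw [Real.convergent_succ, show (Int.fract β)⁻¹ = gaussIter β 1 from rfl, ih hβ₁,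
      convP_succ' β (j + 1), convQ_succ' β (j + 1)]
    field_simp
    push_cast [cfq]
    rfl

theorem exists_convP_convQ_eq_of_abs_sub_lt (hβ : Irrational β) {p q : ℤ} (hq : 0 < q)
    (hpq : IsCoprime p q) (h : |β - p / q| < 1 / (2 * q ^ 2)) :
    ∃ j, convP β (j + 1) = p ∧ convQ β (j + 1) = q := by
  have hpq' : Nat.Coprime p.natAbs q.natAbs := Int.isCoprime_iff_gcd_eq_one.1 hpq
  have hden : ((p / q : ℚ).den : ℝ) = q := by
    exact_mod_cast Rat.den_div_eq_of_coprime hq hpq'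
  obtain ⟨j, hj⟩ :=
    Real.exists_rat_eq_convergent (ξ := β) (q := p / q) (by push_cast [hden]; exact h)
  rw [convergent_eq_convP_div_convQ hβ] at hj
  obtain ⟨hP, hQ⟩ := Rat.div_int_inj hq (convQ_succ_pos hβ j) hpq'
    (Int.isCoprime_iff_gcd_eq_one.1 (isCoprime_convP_convQ β j)) hj
  exact ⟨j, hP.symm, hQ.symm⟩

/-- The denominator `x_{m+1} q_m + q_{m-1}` in `β = (x_{m+1} p_m + p_{m-1}) /
(x_{m+1} q_m + q_{m-1})`, where `x_{m+1} = gaussIter β (m + 1)` is the complete quotient. -/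
noncomputable def completeDenom (β : ℝ) (m : ℕ) : ℝ :=
  gaussIter β (m + 1) * convQ β (m + 1) + convQ β m

theorem mul_completeDenom (hβ : Irrational β) : ∀ m,
    β * completeDenom β m = gaussIter β (m + 1) * convP β (m + 1) + convP β m
  | 0 => by
    have h : gaussIter β 1 * (β - cfq β 0) = 1 := gaussIter_succ_mul_sub_cfq hβ 0
    simp only [completeDenom, convP, convQ]
    push_cast
    linear_combination h
  | m + 1 => by
    have ih := mul_completeDenom hβ m
    simp only [completeDenom] at ih ⊢
    rw [convP, convQ]
    push_cast
    linear_combination gaussIter β (m + 2) * ih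
      - (β * convQ β (m + 1) - convP β (m + 1)) * gaussIter_succ_mul_sub_cfq hβ (m + 1)

theorem convQ_mul_sub_convP_mul_completeDenom (hβ : Irrational β) (m : ℕ) :
    (β * convQ β (m + 1) - convP β (m + 1)) * completeDenom β m = (-1) ^ m := by
  have hdet : ((convP β m * convQ β (m + 1) - convP β (m + 1) * convQ β m : ℤ) : ℝ) =
      (-1) ^ m := by
    exact_mod_cast convP_mul_convQ_succ_sub β m
  push_cast at hdet
  have hfund := mul_completeDenom hβ m
  rw [completeDenom] at hfund ⊢
  linear_combination (convQ β (m + 1) : ℝ) * hfund + hdet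

theorem convQ_lt_completeDenom (hβ : Irrational β) (m : ℕ) :
    (convQ β (m + 1) : ℝ) < completeDenom β m := by
  have hx := one_lt_gaussIter_succ hβ m
  have hQ₁ : (0 : ℝ) < convQ β (m + 1) := by exact_mod_cast convQ_succ_pos hβ m
  have hQ₀ : (0 : ℝ) ≤ convQ β m := by exact_mod_cast convQ_nonneg hβ m
  rw [completeDenom]
  nlinarith

theorem completeDenom_pos (hβ : Irrational β) (m : ℕ) : 0 < completeDenom β m :=
  (convQ_lt_completeDenom hβ m).trans' (by exact_mod_cast convQ_succ_pos hβ m)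

theorem abs_mul_convQ_sub_convP_lt (hβ : Irrational β) (m : ℕ) :
    |β * convQ β (m + 1) - convP β (m + 1)| < 1 / convQ β (m + 1) := by
  have hD := completeDenom_pos hβ m
  have habs : |β * convQ β (m + 1) - convP β (m + 1)| = 1 / completeDenom β m := by
    rw [eq_div_iff hD.ne', ← abs_of_pos hD, ← abs_mul,
      convQ_mul_sub_convP_mul_completeDenom hβ m, abs_neg_one_pow]
  rw [habs]
  exact one_div_lt_one_div_of_lt (by exact_mod_cast convQ_succ_pos hβ m)
    (convQ_lt_completeDenom hβ m)

end ContinuedFraction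

theorem eq_and_neg_one_pow_eq_of_mul_eq {K : Type*} [Field K] [LinearOrder K]
    [IsStrictOrderedRing K] {e x y : K} {i j : ℕ} (hx : 0 < x) (hy : 0 < y)
    (hex : e * x = (-1) ^ i) (hey : e * y = (-1) ^ j) : x = y ∧ (-1 : ℤ) ^ i = (-1) ^ j := by
  suffices h : (-1 : K) ^ i = (-1) ^ j from
    ⟨mul_left_cancel₀ (left_ne_zero_of_mul (hex ▸ pow_ne_zero _ (by norm_num)))
      (hex.trans (h.trans hey.symm)), by exact_mod_cast h⟩
  rcases neg_one_pow_eq_or K i with hi | hi <;> rcases neg_one_pow_eq_or K j with hj | hj <;>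
    rw [hi, hj] <;> rw [hi] at hex <;> rw [hj] at hey <;>
    nlinarith [congrArg (· * y) hex, congrArg (· * x) hey]

section MulConvergent

variable {α : ℝ} {n k j : ℕ} {q' : ℤ}

theorem isCoprime_convP_of_convQ_eq_mul (hdvd : convQ α (k + 1) = n * q') :
    IsCoprime (convP α (k + 1)) q' :=
  (isCoprime_convP_convQ α k).of_isCoprime_of_dvd_right (Dvd.intro_left _ hdvd.symm)

theorem abs_natCast_mul_sub_convP_div_lt (hα : Irrational α) (hn : 2 ≤ n) (hq' : 0 < q')
    (hdvd : convQ α (k + 1) = n * q') :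
    |n * α - convP α (k + 1) / q'| < 1 / (2 * q' ^ 2) := by
  have hq'R : (0 : ℝ) < q' := by exact_mod_cast hq'
  have hnR : (2 : ℝ) ≤ n := by exact_mod_cast hn
  have happ := abs_mul_convQ_sub_convP_lt hα k
  have hqk : (convQ α (k + 1) : ℝ) = n * q' := by exact_mod_cast hdvd
  rw [hqk] at happ
  have he : n * α - convP α (k + 1) / q' = (α * (n * q') - convP α (k + 1)) / q' := by
    field_simp
  rw [he, abs_div, abs_of_pos hq'R]
  calc _ < (1 / (n * q') / q' : ℝ) := by gcongr
    _ ≤ 1 / (2 * q' ^ 2) := by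
      rw [div_div, mul_assoc, ← sq]
      gcongr

theorem dvd_convQ_sub_of_convergent_eq (hdvd : convQ α (k + 1) = n * q')
    (hP : convP (n * α) (j + 1) = convP α (k + 1)) (hQ : convQ (n * α) (j + 1) = q')
    (hsign : (-1 : ℤ) ^ j = (-1) ^ k) :
    q' ∣ convQ α k - convQ (n * α) j := by
  refine (isCoprime_convP_of_convQ_eq_mul hdvd).symm.dvd_of_dvd_mul_left
    ⟨convP α k * n - convP (n * α) j, ?_⟩
  have hβ := convP_mul_convQ_succ_sub (n * α) j
  rw [hP, hQ, hsign] at hβ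
  linear_combination hβ - convP_mul_convQ_succ_sub α k + convP α k * hdvd

theorem completeDenom_eq_of_convergent_eq (hα : Irrational α) (hn : n ≠ 0)
    (hdvd : convQ α (k + 1) = n * q')
    (hP : convP (n * α) (j + 1) = convP α (k + 1)) (hQ : convQ (n * α) (j + 1) = q') :
    completeDenom α k = completeDenom (n * α) j ∧ (-1 : ℤ) ^ k = (-1) ^ j := by
  have hβ := hα.natCast_mul hn
  have hY := convQ_mul_sub_convP_mul_completeDenom hβ j
  have he : (n * α) * convQ (n * α) (j + 1) - convP (n * α) (j + 1)
      = α * convQ α (k + 1) - convP α (k + 1) := by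
    rw [hP, hQ, hdvd]
    push_cast
    ring
  rw [he] at hY
  exact eq_and_neg_one_pow_eq_of_mul_eq (completeDenom_pos hα k) (completeDenom_pos hβ j)
    (convQ_mul_sub_convP_mul_completeDenom hα k) hY

theorem natCast_le_cfq_of_convergent_eq (hα : Irrational α) (hn : n ≠ 0) (hk : k ≠ 0)
    (hdvd : convQ α (k + 1) = n * q')
    (hP : convP (n * α) (j + 1) = convP α (k + 1)) (hQ : convQ (n * α) (j + 1) = q') :
    (n : ℤ) ≤ cfq (n * α) (j + 1) := by
  have hβ := hα.natCast_mul hn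
  obtain ⟨hD, hsign⟩ := completeDenom_eq_of_convergent_eq hα hn hdvd hP hQ
  obtain ⟨w, hw⟩ := dvd_convQ_sub_of_convergent_eq hdvd hP hQ hsign.symm
  have hq' : 0 < q' := hQ ▸ convQ_succ_pos hβ j
  have hw₀ : 0 ≤ w := by
    obtain ⟨k, rfl⟩ := Nat.exists_eq_succ_of_ne_zero hk
    have := convQ_succ_pos hα k
    have := hQ ▸ convQ_mono hβ j.le_succ
    nlinarith
  have hy : gaussIter (n * α) (j + 1) = n * gaussIter α (k + 1) + w := by
    have hwR : (convQ α k : ℝ) - convQ (n * α) j = q' * w := by exact_mod_cast hw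
    have hqk : (convQ α (k + 1) : ℝ) = n * q' := by exact_mod_cast hdvd
    rw [completeDenom, completeDenom, hQ, hqk] at hD
    refine mul_right_cancel₀ (by exact_mod_cast hq'.ne' : (q' : ℝ) ≠ 0) ?_
    linear_combination -hD + hwR
  have hx := one_lt_gaussIter_succ hα k
  have hwR : (0 : ℝ) ≤ w := by exact_mod_cast hw₀
  rw [cfq, Int.le_floor, hy]
  push_cast
  nlinarith

end MulConvergent

theorem convergent_of_mul_and_height_bound_general
    (α : ℝ) (hα : Irrational α) (n : ℕ) (k : ℕ) (q' : ℤ)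
    (hdvd : convQ α (k + 1) = (n : ℤ) * q') :
    IsConvergent ((n : ℝ) * α) ((convP α (k + 1) : ℚ) / (q' : ℚ)) ∧
    ∃ i : ℕ, 1 ≤ i ∧ (n : ℤ) ≤ cfq ((n : ℝ) * α) i := by
  rcases eq_or_ne n 1 with rfl | hn₁
  · simp only [Nat.cast_one, one_mul] at hdvd ⊢
    subst hdvd
    exact ⟨⟨k, rfl⟩, 1, le_rfl, one_le_cfq_succ hα 0⟩
  have hqk := convQ_succ_pos hα k
  have hn₀ : n ≠ 0 := by
    rintro rfl
    simp [hdvd] at hqk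
  have hn : 2 ≤ n := by omega
  have hq' : 0 < q' := pos_of_mul_pos_right (hdvd ▸ hqk) (Int.natCast_nonneg n)
  have hk : k ≠ 0 := by
    rintro rfl
    have : (1 : ℤ) = n * q' := hdvd
    nlinarith
  obtain ⟨j, hP, hQ⟩ := exists_convP_convQ_eq_of_abs_sub_lt (hα.natCast_mul hn₀) hq'
    (isCoprime_convP_of_convQ_eq_mul hdvd) (abs_natCast_mul_sub_convP_div_lt hα hn hq' hdvd)
  exact ⟨⟨j, by rw [hP, hQ]⟩, j + 1, j.succ_pos,
    natCast_le_cfq_of_convergent_eq hα hn₀ hk hdvd hP hQ⟩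

/-- if a convergent denominator `q_k` of a positive irrational `α`
satisfies `n ∣ q_k` and `n < q_k`, writing `q_k = n·q'_k`, then `p_k/q'_k` is a
convergent of `n·α`, and hence `B(n·α) ≥ n`. -/
theorem convergent_of_mul_and_height_bound
    (α : ℝ) (hα : Irrational α) (hpos : 0 < α) (n : ℕ) (k : ℕ) (q' : ℤ)
    (hdvd : convQ α (k + 1) = (n : ℤ) * q') (hlt : (n : ℤ) < convQ α (k + 1)) :
    IsConvergent ((n : ℝ) * α) ((convP α (k + 1) : ℚ) / (q' : ℚ)) ∧
    ∃ i : ℕ, 1 ≤ i ∧ (n : ℤ) ≤ cfq ((n : ℝ) * α) i :=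
  convergent_of_mul_and_height_bound_general α hα n k q' hdvd
end

section
/- Let x_i = a_i/b_i, x_{i+1} = a_{i+1}/b_{i+1}, x_j = a_j/b_j, x_{j+1} = a_{j+1}/b_{j+1} be rationals in reduced form with a_i·b_{i+1} − a_{i+1}·b_i = 1 and a_j·b_{j+1} − a_{j+1}·b_j = 1. Then the matrix φ = (a_j·b_i + a_{j+1}·b_{i+1}, −a_i·a_j − a_{i+1}·a_{j+1} / b_i·b_j + b_{i+1}·b_{j+1}, −a_i·b_j − a_{i+1}·b_{j+1}) has determinant 1, and as a Möbius transformation it maps x_i to x_{j+1} and x_{i+1} to x_j. -/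
/-- the side-pairing matrix `φ` built from two pairs of Farey
neighbours `x_i = a_i/b_i, x_{i+1} = a_{i+1}/b_{i+1}` and `x_j = a_j/b_j,
x_{j+1} = a_{j+1}/b_{j+1}` has determinant 1 and, as a Möbius transformation
(acting projectively on coprime integer pairs), maps `x_i` to `x_{j+1}` and
`x_{i+1}` to `x_j`. -/
theorem side_pairing_matrix_det_and_action
    (ai bi ai1 bi1 aj bj aj1 bj1 : ℤ)
    (hgi : Int.gcd ai bi = 1) (hgi1 : Int.gcd ai1 bi1 = 1)
    (hgj : Int.gcd aj bj = 1) (hgj1 : Int.gcd aj1 bj1 = 1)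
    (hi : ai * bi1 - ai1 * bi = 1) (hj : aj * bj1 - aj1 * bj = 1) :
    (Matrix.det !![aj * bi + aj1 * bi1, -(ai * aj) - ai1 * aj1;
        bi * bj + bi1 * bj1, -(ai * bj) - ai1 * bj1] = 1) ∧
    (Matrix.mulVec !![aj * bi + aj1 * bi1, -(ai * aj) - ai1 * aj1;
        bi * bj + bi1 * bj1, -(ai * bj) - ai1 * bj1] ![ai, bi] = ![aj1, bj1]) ∧
    (Matrix.mulVec !![aj * bi + aj1 * bi1, -(ai * aj) - ai1 * aj1;
        bi * bj + bi1 * bj1, -(ai * bj) - ai1 * bj1] ![ai1, bi1] = ![-aj, -bj]) := by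
  refine ⟨?_, ?_, ?_⟩
  · simp [Matrix.det_fin_two_of]
    nlinarith [hi, hj, sq_nonneg (ai*bi1 - ai1*bi), mul_self_nonneg (1:ℤ)]
  · funext k
    fin_cases k
    · simp [Matrix.mulVec, dotProduct, Fin.sum_univ_two]
      linear_combination aj1 * hi
    · simp [Matrix.mulVec, dotProduct, Fin.sum_univ_two]
      linear_combination bj1 * hi
  · funext k
    fin_cases k
    · simp [Matrix.mulVec, dotProduct, Fin.sum_univ_two]
      linear_combination (-aj) * hi
    · simp [Matrix.mulVec, dotProduct, Fin.sum_univ_two]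
      linear_combination (-bj) * hi
end
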